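/- Suppose ‖w‖₂ ≤ ε₂, y = Xβ + w, and Î_k is a support estimate with residual r^{(k)} = (I_n − P_{Î_k}) y. If u^k = I \ Î_k is the set of unselected true support indices, |Î_k| + |u^k| ≤ k_sup, Î_k ∩ u^k = ∅, and δ_{k_sup} < 1, then √(1−δ_{k_sup}) ‖β_{u^k}‖₂ − ε₂ ≤ ‖r^{(k)}‖₂ ≤ √(1+δ_{k_sup}) ‖β_{u^k}‖₂ + ε₂. -/
import Mathlib

open scoped Classical
open Matrix

noncomputable def norm2 {m : Type*} [Fintype m] (x : m → ℝ) : ℝ :=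
  Real.sqrt (∑ i, (x i) ^ 2)

noncomputable def KSparse {p : ℕ} (k : ℕ) (b : Fin p → ℝ) : Prop :=
  (Finset.univ.filter fun j => b j ≠ 0).card ≤ k

def RIPwith {n p : ℕ} (X : Matrix (Fin n) (Fin p) ℝ) (k : ℕ) (δ : ℝ) : Prop :=
  ∀ b : Fin p → ℝ, KSparse k b →
    (1 - δ) * (norm2 b) ^ 2 ≤ (norm2 (X.mulVec b)) ^ 2 ∧
    (norm2 (X.mulVec b)) ^ 2 ≤ (1 + δ) * (norm2 b) ^ 2

/-- The submatrix of `X` formed by the columns indexed by `J`. -/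
def colSub {n p : ℕ} (X : Matrix (Fin n) (Fin p) ℝ) (J : Finset (Fin p)) :
    Matrix (Fin n) J ℝ :=
  Matrix.of fun i j => X i (j : Fin p)

/-- The Moore–Penrose pseudoinverse `(X_Jᵀ X_J)⁻¹ X_Jᵀ` of the full-column-rank
submatrix `X_J`. -/
noncomputable def pinv {n p : ℕ} (X : Matrix (Fin n) (Fin p) ℝ) (J : Finset (Fin p)) :
    Matrix J (Fin n) ℝ :=
  ((colSub X J)ᵀ * colSub X J)⁻¹ * (colSub X J)ᵀ

/-- The orthogonal projection matrix `P_J = X_J X_J^†` onto `col(X_J)`. -/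
noncomputable def projMat {n p : ℕ} (X : Matrix (Fin n) (Fin p) ℝ) (J : Finset (Fin p)) :
    Matrix (Fin n) (Fin n) ℝ :=
  colSub X J * pinv X J

lemma norm2_nonneg' {m : Type*} [Fintype m] (x : m → ℝ) : 0 ≤ norm2 x :=
  Real.sqrt_nonneg _

lemma norm2_eq_norm' {m : Type*} [Fintype m] (x : m → ℝ) :
    norm2 x = ‖(WithLp.equiv 2 (m → ℝ)).symm x‖ := by
  rw [norm2, EuclideanSpace.norm_eq]; simp [Real.norm_eq_abs, sq_abs]

lemma norm2_add_le' {m : Type*} [Fintype m] (x y : m → ℝ) :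
    norm2 (x + y) ≤ norm2 x + norm2 y := by
  simp only [norm2_eq_norm']; exact norm_add_le _ _

lemma norm2_neg' {m : Type*} [Fintype m] (x : m → ℝ) : norm2 (-x) = norm2 x := by
  simp [norm2]

lemma norm2_sq' {m : Type*} [Fintype m] (x : m → ℝ) :
    norm2 x ^ 2 = ∑ i, (x i) ^ 2 := by
  rw [norm2, Real.sq_sqrt]; positivity

lemma norm2_sq_dot' {m : Type*} [Fintype m] (x : m → ℝ) :
    norm2 x ^ 2 = x ⬝ᵥ x := by
  rw [norm2_sq', dotProduct]; simp [sq]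

lemma norm2_le_of_sq_le_sq {m : Type*} [Fintype m] (x y : m → ℝ)
    (h : norm2 x ^ 2 ≤ norm2 y ^ 2) : norm2 x ≤ norm2 y := by
  have := Real.sqrt_le_sqrt h
  rwa [Real.sqrt_sq (norm2_nonneg' _), Real.sqrt_sq (norm2_nonneg' _)] at this

lemma dot_mulVec_left' {n : ℕ} (M : Matrix (Fin n) (Fin n) ℝ) (a b : Fin n → ℝ) :
    (M.mulVec a) ⬝ᵥ b = a ⬝ᵥ (Mᵀ.mulVec b) := by
  rw [Matrix.dotProduct_mulVec, Matrix.vecMul_transpose]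

lemma proj_contract {n : ℕ} (P : Matrix (Fin n) (Fin n) ℝ)
    (hs : Pᵀ = P) (hi : P * P = P) (v : Fin n → ℝ) :
    norm2 ((1 - P).mulVec v) ≤ norm2 v := by
  apply norm2_le_of_sq_le_sq
  have hQ : (1 - P).mulVec v = v - P.mulVec v := by
    rw [Matrix.sub_mulVec, Matrix.one_mulVec]
  have hkey : (P.mulVec v) ⬝ᵥ (P.mulVec v) = v ⬝ᵥ (P.mulVec v) := by
    rw [dot_mulVec_left' P v (P.mulVec v), hs, Matrix.mulVec_mulVec, hi]
  have hcomm : (P.mulVec v) ⬝ᵥ v = v ⬝ᵥ (P.mulVec v) := dotProduct_comm _ _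
  have hnn : 0 ≤ v ⬝ᵥ (P.mulVec v) := by
    rw [← hkey, ← norm2_sq_dot']; positivity
  rw [norm2_sq_dot', norm2_sq_dot', hQ, dotProduct_sub, sub_dotProduct,
    sub_dotProduct, hkey, hcomm]
  linarith

lemma sum_sq_support {p : ℕ} (b : Fin p → ℝ) (J : Finset (Fin p))
    (hb : ∀ j, b j ≠ 0 → j ∈ J) :
    ∑ j, b j ^ 2 = ∑ j ∈ J, b j ^ 2 := by
  refine (Finset.sum_subset (Finset.subset_univ J) ?_).symm
  intro x _ hx
  have : b x = 0 := by by_contra h; exact hx (hb x h)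
  simp [this]

lemma mulVec_support_sub {n p : ℕ} (X : Matrix (Fin n) (Fin p) ℝ)
    (J : Finset (Fin p)) (b : Fin p → ℝ) (hb : ∀ j, b j ≠ 0 → j ∈ J) :
    X.mulVec b = (colSub X J).mulVec (fun j : J => b (j : Fin p)) := by
  funext i
  simp only [Matrix.mulVec, dotProduct]
  rw [show (∑ j : J, colSub X J i j * b (j : Fin p))
      = ∑ j ∈ J.attach, X i (j : Fin p) * b (j : Fin p) from rfl,
    Finset.sum_attach J (fun j => X i j * b j)]
  refine (Finset.sum_subset (Finset.subset_univ J) ?_).symm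
  intro x _ hx
  have : b x = 0 := by by_contra h; exact hx (hb x h)
  simp [this]

/-- Residual sandwich bound: with `y = Xβ + w`, `‖w‖₂ ≤ ε₂`, true support `I`,
estimate `Î`, unselected indices `u = I \ Î`, `|Î| + |u| ≤ k_sup`, and RIP of
order `k_sup` with constant `δ < 1`,
`√(1−δ)‖β_u‖₂ − ε₂ ≤ ‖(I_n − P_Î) y‖₂ ≤ √(1+δ)‖β_u‖₂ + ε₂`. -/
theorem residual_sandwich {n p : ℕ} (X : Matrix (Fin n) (Fin p) ℝ)
    (ksup : ℕ) (δ : ℝ) (hδ0 : 0 ≤ δ) (hδ1 : δ < 1) (hRIP : RIPwith X ksup δ)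
    (β : Fin p → ℝ) (I : Finset (Fin p)) (hsupp : ∀ j, β j ≠ 0 ↔ j ∈ I)
    (w : Fin n → ℝ) (ε₂ : ℝ) (hw : norm2 w ≤ ε₂)
    (Ihat : Finset (Fin p))
    (hcard : Ihat.card + (I \ Ihat).card ≤ ksup)
    (hfull : ((colSub X Ihat)ᵀ * colSub X Ihat) * ((colSub X Ihat)ᵀ * colSub X Ihat)⁻¹ = 1)
    (y : Fin n → ℝ) (hy : y = X.mulVec β + w) :
    Real.sqrt (1 - δ) * norm2 (fun j : ↥(I \ Ihat) => β (j : Fin p)) - ε₂ ≤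
      norm2 (((1 : Matrix (Fin n) (Fin n) ℝ) - projMat X Ihat).mulVec y) ∧
    norm2 (((1 : Matrix (Fin n) (Fin n) ℝ) - projMat X Ihat).mulVec y) ≤
      Real.sqrt (1 + δ) * norm2 (fun j : ↥(I \ Ihat) => β (j : Fin p)) + ε₂ := by
  set A := colSub X Ihat with hA
  set G := Aᵀ * A with hG
  set P := projMat X Ihat with hP
  set Q := (1 : Matrix (Fin n) (Fin n) ℝ) - P with hQdef
  have hGinv : G⁻¹ * G = 1 := mul_eq_one_comm.mp hfull
  have hPdef : P = A * (G⁻¹ * Aᵀ) := rfl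
  have hPA : P * A = A := by
    rw [hPdef]
    calc A * (G⁻¹ * Aᵀ) * A = A * (G⁻¹ * (Aᵀ * A)) := by
          rw [Matrix.mul_assoc, Matrix.mul_assoc]
      _ = A * (1 : Matrix ↥Ihat ↥Ihat ℝ) := by rw [← hG, hGinv]
      _ = A := Matrix.mul_one A
  have hPP : P * P = P := by
    nth_rewrite 2 [hPdef]
    rw [← Matrix.mul_assoc, hPA, ← hPdef]
  have hGsymm : Gᵀ = G := by rw [hG, Matrix.transpose_mul, Matrix.transpose_transpose]
  have hPsymm : Pᵀ = P := by
    rw [hPdef, Matrix.transpose_mul, Matrix.transpose_mul, Matrix.transpose_transpose,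
      Matrix.transpose_nonsing_inv, hGsymm, Matrix.mul_assoc]
  -- decomposition
  set u := I \ Ihat with hu
  set b1 : Fin p → ℝ := fun j => if j ∈ u then β j else 0 with hb1
  set b2 : Fin p → ℝ := fun j => if j ∈ u then 0 else β j with hb2
  have hβ : β = b1 + b2 := by
    funext j; by_cases h : j ∈ u <;> simp [hb1, hb2, h]
  have hb2supp : ∀ j, b2 j ≠ 0 → j ∈ Ihat := by
    intro j hj
    by_cases h : j ∈ u
    · simp [hb2, h] at hj
    · have hβj : β j ≠ 0 := by simpa [hb2, h] using hj
      have hI : j ∈ I := (hsupp j).mp hβj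
      by_contra hni
      exact h (Finset.mem_sdiff.mpr ⟨hI, hni⟩)
  have hb1supp : ∀ j, b1 j ≠ 0 → j ∈ u := by
    intro j hj; by_contra h; simp [hb1, h] at hj
  -- norm2 b1 equals the subtype norm
  have hnb1 : norm2 b1 = norm2 (fun j : ↥u => β (j : Fin p)) := by
    rw [norm2, norm2, sum_sq_support b1 u hb1supp,
      ← Finset.sum_attach u (fun j => b1 j ^ 2)]
    congr 1
    refine Finset.sum_congr rfl ?_
    intro j _
    simp [hb1, j.2]
  -- Q annihilates X b2
  have hQb2 : Q.mulVec (X.mulVec b2) = 0 := by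
    rw [mulVec_support_sub X Ihat b2 hb2supp, ← hA, hQdef, Matrix.sub_mulVec,
      Matrix.one_mulVec, Matrix.mulVec_mulVec, hPA, sub_self]
  -- residual decomposition
  have hQy : Q.mulVec y = Q.mulVec (X.mulVec b1) + Q.mulVec w := by
    rw [hy, hβ, Matrix.mulVec_add, Matrix.mulVec_add, Matrix.mulVec_add, hQb2, add_zero]
  -- sparsity of b1
  have hucard : u.card ≤ ksup := le_trans (Nat.le_add_left _ _) hcard
  have hb1sparse : KSparse ksup b1 := by
    unfold KSparse
    refine le_trans (Finset.card_le_card ?_) hucard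
    intro j hj
    exact hb1supp j (Finset.mem_filter.mp hj).2
  -- the correction vector c
  set v1 : ↥Ihat → ℝ := (pinv X Ihat).mulVec (X.mulVec b1) with hv1
  set c : Fin p → ℝ := fun j => if h : j ∈ Ihat then v1 ⟨j, h⟩ else 0 with hc
  have hcsupp : ∀ j, c j ≠ 0 → j ∈ Ihat := by
    intro j hj; by_contra h; simp [hc, h] at hj
  have hXc : X.mulVec c = P.mulVec (X.mulVec b1) := by
    rw [mulVec_support_sub X Ihat c hcsupp, ← hA, hP, projMat, ← Matrix.mulVec_mulVec, ← hv1]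
    apply congrArg
    funext j
    simp [hc, j.2]
  have hQb1X : Q.mulVec (X.mulVec b1) = X.mulVec (b1 - c) := by
    rw [hQdef, Matrix.sub_mulVec, Matrix.one_mulVec, ← hXc, ← Matrix.mulVec_sub]
  -- sparsity of b1 - c
  have hbc_sparse : KSparse ksup (b1 - c) := by
    unfold KSparse
    refine le_trans (Finset.card_le_card (show _ ⊆ Ihat ∪ u from ?_)) ?_
    · intro j hj
      have hj' : b1 j - c j ≠ 0 := by simpa using (Finset.mem_filter.mp hj).2
      by_cases h1 : b1 j = 0
      · have : c j ≠ 0 := by intro h2; rw [h1, h2] at hj'; simp at hj'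
        exact Finset.mem_union_left _ (hcsupp j this)
      · exact Finset.mem_union_right _ (hb1supp j h1)
    · exact le_trans (Finset.card_union_le _ _) hcard
  -- pointwise lower bound
  have hpt : ∀ j, b1 j ^ 2 ≤ (b1 j - c j) ^ 2 := by
    intro j
    by_cases h : j ∈ u
    · have hni : j ∉ Ihat := (Finset.mem_sdiff.mp h).2
      simp [hc, hni]
    · have hb0 : b1 j = 0 := by simp [hb1, h]
      rw [hb0]
      nlinarith [sq_nonneg (c j)]
  have hsumle : norm2 b1 ^ 2 ≤ norm2 (b1 - c) ^ 2 := by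
    rw [norm2_sq', norm2_sq']
    exact Finset.sum_le_sum fun j _ => hpt j
  -- RIP bounds
  obtain ⟨hlo, -⟩ := hRIP (b1 - c) hbc_sparse
  obtain ⟨-, hhi⟩ := hRIP b1 hb1sparse
  have hδm : (0:ℝ) ≤ 1 - δ := by linarith
  have hδp : (0:ℝ) ≤ 1 + δ := by linarith
  -- lower bound on a := norm2 (Q (X b1))
  set a := norm2 (Q.mulVec (X.mulVec b1)) with ha
  have hlowa : Real.sqrt (1 - δ) * norm2 b1 ≤ a := by
    have h1 : (1 - δ) * norm2 b1 ^ 2 ≤ a ^ 2 := by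
      rw [ha, hQb1X]
      calc (1 - δ) * norm2 b1 ^ 2 ≤ (1 - δ) * norm2 (b1 - c) ^ 2 :=
            mul_le_mul_of_nonneg_left hsumle hδm
        _ ≤ _ := hlo
    have h2 := Real.sqrt_le_sqrt h1
    rwa [Real.sqrt_mul hδm, Real.sqrt_sq (norm2_nonneg' _),
      Real.sqrt_sq (norm2_nonneg' _)] at h2
  have hhia : a ≤ Real.sqrt (1 + δ) * norm2 b1 := by
    have hcon : a ≤ norm2 (X.mulVec b1) := by
      rw [ha, hQdef]; exact proj_contract P hPsymm hPP _
    have h2 := Real.sqrt_le_sqrt hhi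
    rw [Real.sqrt_mul hδp, Real.sqrt_sq (norm2_nonneg' _),
      Real.sqrt_sq (norm2_nonneg' _)] at h2
    linarith
  -- noise contraction
  have hQw : norm2 (Q.mulVec w) ≤ ε₂ := by
    rw [hQdef]; exact le_trans (proj_contract P hPsymm hPP w) hw
  -- triangle inequalities
  set r := norm2 (Q.mulVec y) with hr
  have htri1 : r ≤ a + norm2 (Q.mulVec w) := by
    rw [hr, hQy]; exact norm2_add_le' _ _
  have htri2 : a ≤ r + norm2 (Q.mulVec w) := by
    have : Q.mulVec (X.mulVec b1) = Q.mulVec y + -(Q.mulVec w) := by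
      rw [hQy]; ring_nf
    rw [ha, this]
    exact le_trans (norm2_add_le' _ _) (by rw [norm2_neg'])
  rw [← hnb1]
  constructor
  · linarith
  · linarith
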